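/- arXiv:2604.01399 — 2 statements merged into one kernel-verified Lean document; each statement's English description precedes it below -/
import Mathlib

section
/- Let (E, ℰ) be a measurable space, Λ an s-finite measure on E, and ξ a Poisson point process on E with mean measure Λ. Let f : E → ℝ be measurable with ∫ (|f(y)| ∧ 1) Λ(dy) < ∞. Then ∫ f dξ = 0 almost surely if and only if f(y) = 0 for Λ-almost every y ∈ E. -/
open MeasureTheory ProbabilityTheory ENNReal

/-- Probability that a Poisson random variable with mean `r ∈ [0,∞]` equals `n`;
when `r = ∞` the variable is almost surely `∞`, so each finite value has probability `0`. -/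
noncomputable def poissonProb (r : ℝ≥0∞) (n : ℕ) : ℝ≥0∞ :=
  if r = ∞ then 0
  else ENNReal.ofReal (Real.exp (-(r.toReal)) * r.toReal ^ n / n.factorial)


lemma poissonProb_tsum {r : ℝ≥0∞} (hr : r ≠ ∞) : ∑' n, poissonProb r n = 1 := by
  have h : ∀ n, poissonProb r n
      = ENNReal.ofReal (ProbabilityTheory.poissonPMFReal r.toNNReal n) := by
    intro n
    simp only [poissonProb, if_neg hr, ProbabilityTheory.poissonPMFReal,
      ENNReal.coe_toNNReal_eq_toReal]
  simp only [h]
  rw [← ENNReal.ofReal_tsum_of_nonneg (fun n => ProbabilityTheory.poissonPMFReal_nonneg)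
    (ProbabilityTheory.poissonPMFRealSum r.toNNReal).summable,
    (show ∑' n, ProbabilityTheory.poissonPMFReal r.toNNReal n = 1 from
      (ProbabilityTheory.poissonPMFRealSum r.toNNReal).tsum_eq), ENNReal.ofReal_one]

set_option maxHeartbeats 1000000 in
lemma poissonProb_mean {r : ℝ≥0∞} (hr : r ≠ ∞) :
    ∑' n : ℕ, (n : ℝ≥0∞) * poissonProb r n = r := by
  have ht : 0 ≤ r.toReal := ENNReal.toReal_nonneg
  have key : ∀ n : ℕ, ((n + 1 : ℕ) : ℝ≥0∞) * poissonProb r (n + 1) = r * poissonProb r n := by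
    intro n
    simp only [poissonProb, if_neg hr]
    rw [show ((n + 1 : ℕ) : ℝ≥0∞) = ENNReal.ofReal ((n+1 : ℕ) : ℝ) by
        rw [ENNReal.ofReal_natCast],
      ← ENNReal.ofReal_mul (by positivity)]
    have h2 : ((n+1 : ℕ) : ℝ) * (Real.exp (-r.toReal) * r.toReal ^ (n+1) / (Nat.factorial (n+1)))
        = r.toReal * (Real.exp (-r.toReal) * r.toReal ^ n / Nat.factorial n) := by
      rw [Nat.factorial_succ, pow_succ]
      have h1 : (Nat.factorial n : ℝ) ≠ 0 := Nat.cast_ne_zero.mpr (Nat.factorial_ne_zero n)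
      push_cast
      field_simp
    rw [h2, ENNReal.ofReal_mul ht, ENNReal.ofReal_toReal hr]
  rw [tsum_eq_zero_add' ENNReal.summable]
  simp only [key, Nat.cast_zero, zero_mul, zero_add]
  rw [ENNReal.tsum_mul_left, poissonProb_tsum hr, mul_one]

lemma poissonProb_pos {r : ℝ≥0∞} (hr0 : r ≠ 0) (hr : r ≠ ∞) (n : ℕ) :
    0 < poissonProb r n := by
  have ht : 0 < r.toReal := ENNReal.toReal_pos hr0 hr
  simp only [poissonProb, if_neg hr]
  apply ENNReal.ofReal_pos.mpr
  positivity

lemma poissonProb_zero_pos {r : ℝ≥0∞} (hr : r ≠ ∞) : 0 < poissonProb r 0 := by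
  simp only [poissonProb, if_neg hr, pow_zero, Nat.factorial_zero, Nat.cast_one, mul_one, div_one]
  exact ENNReal.ofReal_pos.mpr (Real.exp_pos _)

lemma poissonProb_zero_zero : poissonProb 0 0 = 1 := by
  simp [poissonProb]

section count

variable {Ω : Type*} [MeasurableSpace Ω] (P : Measure Ω) [IsProbabilityMeasure P]

lemma ae_nat_of_poisson {g : Ω → ℝ≥0∞} (hg : Measurable g) {r : ℝ≥0∞} (hr : r ≠ ∞)
    (hd : ∀ n : ℕ, P {ω | g ω = n} = poissonProb r n) :
    ∀ᵐ ω ∂P, ∃ n : ℕ, g ω = n := by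
  have hmeas : ∀ n : ℕ, MeasurableSet {ω | g ω = (n : ℝ≥0∞)} :=
    fun n => hg (measurableSet_singleton _)
  have hdisj : Pairwise (Function.onFun Disjoint (fun n : ℕ => {ω | g ω = (n : ℝ≥0∞)})) := by
    intro i j hij
    refine Set.disjoint_left.mpr fun ω hi hj => ?_
    exact hij (Nat.cast_injective (hi.symm.trans hj))
  have hS : P (⋃ n : ℕ, {ω | g ω = (n : ℝ≥0∞)}) = 1 := by
    rw [measure_iUnion hdisj hmeas]
    simp only [hd]
    exact poissonProb_tsum hr
  have hcompl : P (⋃ n : ℕ, {ω | g ω = (n : ℝ≥0∞)})ᶜ = 0 := by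
    rw [measure_compl (MeasurableSet.iUnion hmeas) (measure_ne_top _ _), hS]
    simp
  rw [ae_iff]
  refine measure_mono_null (fun ω hω => ?_) hcompl
  simp only [Set.mem_setOf_eq, not_exists] at hω
  simp only [Set.mem_compl_iff, Set.mem_iUnion, Set.mem_setOf_eq, not_exists]
  exact hω

lemma lintegral_of_poisson {g : Ω → ℝ≥0∞} (hg : Measurable g) (r : ℝ≥0∞)
    (hd : ∀ n : ℕ, P {ω | g ω = n} = poissonProb r n)
    (hinf : r = ∞ → ∀ᵐ ω ∂P, g ω = ∞) :
    ∫⁻ ω, g ω ∂P = r := by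
  by_cases hr : r = ∞
  · rw [lintegral_congr_ae (hinf hr), lintegral_const, measure_univ, mul_one, hr]
  · have hmeas : ∀ n : ℕ, MeasurableSet {ω | g ω = (n : ℝ≥0∞)} :=
      fun n => hg (measurableSet_singleton _)
    have hdisj : Pairwise (Function.onFun Disjoint (fun n : ℕ => {ω | g ω = (n : ℝ≥0∞)})) := by
      intro i j hij
      refine Set.disjoint_left.mpr fun ω hi hj => ?_
      exact hij (Nat.cast_injective (hi.symm.trans hj))
    have hae := ae_nat_of_poisson P hg hr hd
    have hmem : ∀ᵐ ω ∂P, ω ∈ ⋃ n : ℕ, {ω | g ω = (n : ℝ≥0∞)} := by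
      filter_upwards [hae] with ω hω
      obtain ⟨n, hn⟩ := hω
      exact Set.mem_iUnion.mpr ⟨n, hn⟩
    calc ∫⁻ ω, g ω ∂P = ∫⁻ ω in ⋃ n : ℕ, {ω | g ω = (n : ℝ≥0∞)}, g ω ∂P := by
          rw [Measure.restrict_eq_self_of_ae_mem hmem]
      _ = ∑' n : ℕ, ∫⁻ ω in {ω | g ω = (n : ℝ≥0∞)}, g ω ∂P := lintegral_iUnion hmeas hdisj g
      _ = ∑' n : ℕ, (n : ℝ≥0∞) * poissonProb r n := by
          refine tsum_congr fun n => ?_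
          rw [setLIntegral_congr_fun (hmeas n) (fun ω hω => hω),
            setLIntegral_const, hd n]
      _ = r := poissonProb_mean hr

end count

/-- `ξ` is a Poisson point process on `E` with mean measure `Λ`, under the probability
measure `P`: counts on measurable sets are measurable, Poisson distributed with the
prescribed mean, and independent over disjoint sets. -/
def IsPoissonPP {Ω E : Type*} [MeasurableSpace Ω] [MeasurableSpace E]
    (P : Measure Ω) (ξ : Ω → Measure E) (Λ : Measure E) : Prop :=
  (∀ A : Set E, MeasurableSet A → Measurable fun ω => ξ ω A) ∧
  (∀ A : Set E, MeasurableSet A →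
    ((∀ n : ℕ, P {ω | ξ ω A = n} = poissonProb (Λ A) n) ∧
      (Λ A = ∞ → ∀ᵐ ω ∂P, ξ ω A = ∞))) ∧
  (∀ (m : ℕ) (A : Fin m → Set E), (∀ i, MeasurableSet (A i)) →
    Pairwise (Function.onFun Disjoint A) →
    iIndepFun (fun i ω => ξ ω (A i)) P)

section pp

variable {Ω E : Type*} [MeasurableSpace Ω] [MeasurableSpace E]
  {P : Measure Ω} [IsProbabilityMeasure P] {Λ : Measure E} {ξ : Ω → Measure E}

lemma IsPoissonPP.measurable_xi (hξ : IsPoissonPP P ξ Λ) : Measurable ξ :=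
  Measure.measurable_of_measurable_coe _ fun s hs => hξ.1 s hs

lemma IsPoissonPP.mean (hξ : IsPoissonPP P ξ Λ) {A : Set E} (hA : MeasurableSet A) :
    ∫⁻ ω, ξ ω A ∂P = Λ A :=
  lintegral_of_poisson P (hξ.1 A hA) (Λ A) (hξ.2.1 A hA).1 (hξ.2.1 A hA).2

lemma IsPoissonPP.bind_eq (hξ : IsPoissonPP P ξ Λ) : P.bind ξ = Λ := by
  ext A hA
  rw [Measure.bind_apply hA hξ.measurable_xi.aemeasurable]
  exact hξ.mean hA

lemma IsPoissonPP.campbell (hξ : IsPoissonPP P ξ Λ) {g : E → ℝ≥0∞} (hg : Measurable g) :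
    ∫⁻ ω, ∫⁻ y, g y ∂(ξ ω) ∂P = ∫⁻ y, g y ∂Λ := by
  rw [← hξ.bind_eq, Measure.lintegral_bind hξ.measurable_xi.aemeasurable hg.aemeasurable]

lemma IsPoissonPP.ae_integrable (hξ : IsPoissonPP P ξ Λ)
    {f : E → ℝ} (hf : Measurable f)
    (hint : ∫⁻ y, min (ENNReal.ofReal |f y|) 1 ∂Λ < ∞) :
    ∀ᵐ ω ∂P, Integrable f (ξ ω) := by
  have hminmeas : Measurable fun y => min (ENNReal.ofReal |f y|) 1 :=
    (hf.abs.ennreal_ofReal).min measurable_const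
  have hfin1 : ∀ᵐ ω ∂P, ∫⁻ y, min (ENNReal.ofReal |f y|) 1 ∂(ξ ω) < ∞ := by
    apply ae_lt_top ((Measure.measurable_lintegral hminmeas).comp hξ.measurable_xi)
    rw [Function.comp_def]
    rw [hξ.campbell hminmeas]
    exact hint.ne
  set B : ℕ → Set E := fun k => (fun y => |f y|) ⁻¹' Set.Ico ((k : ℝ) + 1) ((k : ℝ) + 2)
    with hBdef
  have hBmeas : ∀ k, MeasurableSet (B k) := fun k => hf.abs measurableSet_Ico
  have hBlt : ∀ i j : ℕ, i < j → Disjoint (B i) (B j) := by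
    intro i j h
    refine Set.disjoint_left.mpr fun y hyi hyj => ?_
    have h1 : (i : ℝ) + 1 ≤ (j : ℝ) := by exact_mod_cast Nat.succ_le_of_lt h
    have h2 := hyi.2
    have h3 := hyj.1
    simp only [Set.mem_preimage, Set.mem_Ico] at h2 h3
    linarith [hyi.2, hyj.1]
  have hBdisj : Pairwise (Function.onFun Disjoint B) :=
    fun i j hij => hij.lt_or_gt.elim (hBlt i j) (fun h => (hBlt j i h).symm)
  have honem : MeasurableSet {y | 1 ≤ |f y|} := measurableSet_le measurable_const hf.abs
  have hT : Λ {y | 1 ≤ |f y|} < ∞ := by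
    have h1 : Λ {y | 1 ≤ |f y|} = ∫⁻ _ in {y | 1 ≤ |f y|}, 1 ∂Λ := (setLIntegral_one _).symm
    rw [h1]
    calc ∫⁻ _ in {y | 1 ≤ |f y|}, 1 ∂Λ
        ≤ ∫⁻ y in {y | 1 ≤ |f y|}, min (ENNReal.ofReal |f y|) 1 ∂Λ := by
          refine setLIntegral_mono hminmeas fun y hy => ?_
          exact le_min (ENNReal.one_le_ofReal.mpr hy) le_rfl
      _ ≤ ∫⁻ y, min (ENNReal.ofReal |f y|) 1 ∂Λ := setLIntegral_le_lintegral _ _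
      _ < ∞ := hint
  have hsub : ∀ k, B k ⊆ {y | 1 ≤ |f y|} := by
    intro k y hy
    have h1 := hy.1
    simp only [Set.mem_setOf_eq]
    have : (0:ℝ) ≤ k := Nat.cast_nonneg k
    linarith
  have hsumB : ∑' k, Λ (B k) ≤ Λ {y | 1 ≤ |f y|} := by
    rw [← measure_iUnion hBdisj hBmeas]
    exact measure_mono (Set.iUnion_subset hsub)
  have hsk : ∀ k, P {ω | 1 ≤ ξ ω (B k)} ≤ Λ (B k) := by
    intro k
    have h1 := mul_meas_ge_le_lintegral₀ (μ := P) (hξ.1 (B k) (hBmeas k)).aemeasurable 1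
    rw [one_mul] at h1
    rw [← hξ.mean (hBmeas k)]
    exact h1
  have hBCsum : ∑' k, P {ω | 1 ≤ ξ ω (B k)} ≠ ∞ :=
    (lt_of_le_of_lt (le_trans (ENNReal.tsum_le_tsum hsk) hsumB) hT).ne
  have hBC := ae_eventually_notMem hBCsum
  have hnat : ∀ᵐ ω ∂P, ∀ k, ∃ n : ℕ, ξ ω (B k) = n := by
    rw [ae_all_iff]
    intro k
    exact ae_nat_of_poisson P (hξ.1 _ (hBmeas k))
      (lt_of_le_of_lt (measure_mono (hsub k)) hT).ne (hξ.2.1 _ (hBmeas k)).1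
  filter_upwards [hfin1, hBC, hnat] with ω h1 h2 h3
  refine ⟨hf.aestronglyMeasurable, ?_⟩
  rw [hasFiniteIntegral_iff_norm]
  simp only [Real.norm_eq_abs]
  obtain ⟨K, hK⟩ := Filter.eventually_atTop.mp h2
  have hpt : ∀ y, ENNReal.ofReal |f y|
      ≤ min (ENNReal.ofReal |f y|) 1
        + ∑' k, (B k).indicator (fun _ => ((k : ℝ≥0∞) + 2)) y := by
    intro y
    rcases lt_or_ge (|f y|) 1 with hy | hy
    · rw [min_eq_left (ENNReal.ofReal_le_one.mpr hy.le)]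
      exact le_self_add
    · have hn1 : 1 ≤ ⌊|f y|⌋₊ := Nat.le_floor (by exact_mod_cast hy)
      set k := ⌊|f y|⌋₊ - 1 with hkdef
      have hk1 : ((k : ℝ) + 1) = (⌊|f y|⌋₊ : ℝ) := by
        have : k + 1 = ⌊|f y|⌋₊ := Nat.succ_pred_eq_of_pos hn1
        exact_mod_cast congrArg (Nat.cast : ℕ → ℝ) this
      have hymem : y ∈ B k := by
        constructor
        · rw [hk1]; exact Nat.floor_le (abs_nonneg _)
        · have := Nat.lt_floor_add_one (|f y|)
          rw [← hk1] at this
          linarith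
      calc ENNReal.ofReal |f y| ≤ (k : ℝ≥0∞) + 2 := by
            rw [show ((k : ℝ≥0∞) + 2) = ENNReal.ofReal ((k : ℝ) + 2) by
              rw [ENNReal.ofReal_add (Nat.cast_nonneg k) (by norm_num)]
              simp]
            refine ENNReal.ofReal_le_ofReal ?_
            have := hymem.2
            linarith
        _ = (B k).indicator (fun _ => ((k : ℝ≥0∞) + 2)) y :=
              (Set.indicator_of_mem hymem fun _ => ((k : ℝ≥0∞) + 2)).symm
        _ ≤ ∑' j, (B j).indicator (fun _ => ((j : ℝ≥0∞) + 2)) y := ENNReal.le_tsum k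
        _ ≤ _ := le_add_self
  calc ∫⁻ y, ENNReal.ofReal |f y| ∂(ξ ω)
      ≤ ∫⁻ y, (min (ENNReal.ofReal |f y|) 1
          + ∑' k, (B k).indicator (fun _ => ((k : ℝ≥0∞) + 2)) y) ∂(ξ ω) := lintegral_mono hpt
    _ = ∫⁻ y, min (ENNReal.ofReal |f y|) 1 ∂(ξ ω)
          + ∫⁻ y, ∑' k, (B k).indicator (fun _ => ((k : ℝ≥0∞) + 2)) y ∂(ξ ω) :=
        lintegral_add_left hminmeas _
    _ = ∫⁻ y, min (ENNReal.ofReal |f y|) 1 ∂(ξ ω)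
          + ∑' k : ℕ, ((k : ℝ≥0∞) + 2) * ξ ω (B k) := by
        rw [lintegral_tsum fun k =>
          (measurable_const.indicator (hBmeas k)).aemeasurable]
        congr 1
        exact tsum_congr fun k => lintegral_indicator_const (hBmeas k) _
    _ < ∞ := by
        refine ENNReal.add_lt_top.mpr ⟨h1, ?_⟩
        rw [tsum_eq_sum (s := Finset.range K) ?_]
        · refine ENNReal.sum_lt_top.mpr fun k _ => ?_
          obtain ⟨n, hn⟩ := h3 k
          rw [hn]
          exact ENNReal.mul_lt_top
            (ENNReal.add_lt_top.mpr ⟨ENNReal.natCast_lt_top k, by norm_num⟩)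
            (ENNReal.natCast_lt_top n)
        · intro k hk
          have hkK : K ≤ k := by
            by_contra h
            exact hk (Finset.mem_range.mpr (lt_of_not_ge h))
          have hωk := hK k hkK
          simp only [Set.mem_setOf_eq, not_le] at hωk
          obtain ⟨n, hn⟩ := h3 k
          rw [hn] at hωk ⊢
          have : n = 0 := by
            by_contra hne
            exact absurd (Nat.one_le_cast.mpr (Nat.one_le_iff_ne_zero.mpr hne)) (not_le.mpr hωk)
          rw [this]
          simp

end pp

set_option maxHeartbeats 1000000 in
lemma aux_pos {Ω E : Type*} [MeasurableSpace Ω] [MeasurableSpace E]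
    {P : Measure Ω} [IsProbabilityMeasure P] {Λ : Measure E} {ξ : Ω → Measure E}
    (hξ : IsPoissonPP P ξ Λ) {f : E → ℝ} (hf : Measurable f)
    (hint : ∫⁻ y, min (ENNReal.ofReal |f y|) 1 ∂Λ < ∞)
    (hzero : ∀ᵐ ω ∂P, ∫ y, f y ∂(ξ ω) = 0)
    {ε : ℝ} (hε : 0 < ε) (hε1 : ε ≤ 1) :
    Λ {y | ε < f y} = 0 := by
  by_contra hB0
  have hmin : Measurable fun y => min (ENNReal.ofReal |f y|) 1 :=
    (hf.abs.ennreal_ofReal).min measurable_const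
  set B : Set E := {y | ε < f y} with hBdef
  have hBm : MeasurableSet B := measurableSet_lt measurable_const hf
  set C : Set E := {y | ε < -f y} with hCdef
  have hCm : MeasurableSet C := measurableSet_lt measurable_const hf.neg
  set M : ℕ → Set E :=
    fun j => {y | ε * (2⁻¹ : ℝ) ^ (j + 1) < -f y ∧ -f y ≤ ε * (2⁻¹ : ℝ) ^ j} with hMdef
  have hMm : ∀ j, MeasurableSet (M j) := fun j =>
    (measurableSet_lt measurable_const hf.neg).inter (measurableSet_le hf.neg measurable_const)
  -- finiteness of sets where |f| is bounded below
  have hfinset : ∀ S : Set E, MeasurableSet S → (∀ y ∈ S, ε ≤ |f y|) → Λ S < ∞ := by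
    intro S hS hsub
    have h1 : ENNReal.ofReal ε * Λ S ≤ ∫⁻ y, min (ENNReal.ofReal |f y|) 1 ∂Λ := by
      rw [← setLIntegral_const S (ENNReal.ofReal ε)]
      calc ∫⁻ _ in S, ENNReal.ofReal ε ∂Λ
          ≤ ∫⁻ y in S, min (ENNReal.ofReal |f y|) 1 ∂Λ :=
            setLIntegral_mono hmin fun y hy =>
              le_min (ENNReal.ofReal_le_ofReal (hsub y hy)) (ENNReal.ofReal_le_one.mpr hε1)
        _ ≤ ∫⁻ y, min (ENNReal.ofReal |f y|) 1 ∂Λ := setLIntegral_le_lintegral _ _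
    rw [lt_top_iff_ne_top]
    intro hSt
    rw [hSt, ENNReal.mul_top (ENNReal.ofReal_pos.mpr hε).ne'] at h1
    exact hint.ne (top_le_iff.mp h1)
  have hΛB : Λ B < ∞ := hfinset B hBm fun y hy => (le_of_lt hy).trans (le_abs_self _)
  have hΛC : Λ C < ∞ := hfinset C hCm fun y hy => (le_of_lt hy).trans (neg_le_abs _)
  -- disjointness
  have hpowpos : ∀ j : ℕ, (0:ℝ) < ε * (2⁻¹:ℝ) ^ j := fun j => by positivity
  have hpowle : ∀ j : ℕ, ε * (2⁻¹:ℝ) ^ j ≤ ε := fun j => by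
    apply mul_le_of_le_one_right hε.le
    exact pow_le_one₀ (by norm_num) (by norm_num)
  have hpowmono : ∀ i j : ℕ, i ≤ j → ε * (2⁻¹:ℝ) ^ j ≤ ε * (2⁻¹:ℝ) ^ i := fun i j h =>
    mul_le_mul_of_nonneg_left (pow_le_pow_of_le_one (by norm_num) (by norm_num) h) hε.le
  have hdBC : Disjoint B C := Set.disjoint_left.mpr fun y hyB hyC => by
    simp only [hBdef, hCdef, Set.mem_setOf_eq] at hyB hyC; linarith
  have hdBM : ∀ j, Disjoint B (M j) := fun j => Set.disjoint_left.mpr fun y hyB hyM => by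
    have h1 := hyM.1
    have h2 := hpowpos (j+1)
    simp only [hBdef, Set.mem_setOf_eq] at hyB
    linarith
  have hdCM : ∀ j, Disjoint C (M j) := fun j => Set.disjoint_left.mpr fun y hyC hyM => by
    have h1 := hyM.2
    have h2 := hpowle j
    simp only [hCdef, Set.mem_setOf_eq] at hyC
    linarith
  have hdMM : ∀ i j : ℕ, i ≠ j → Disjoint (M i) (M j) := by
    have base : ∀ i j : ℕ, i < j → Disjoint (M i) (M j) := fun i j h =>
      Set.disjoint_left.mpr fun y hyi hyj => by
        have h1 := hyi.1
        have h2 := hyj.2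
        have h3 := hpowmono (i+1) j h
        linarith
    exact fun i j hij => hij.lt_or_gt.elim (base i j) fun h => (base j i h).symm
  have hMdisj : Pairwise (Function.onFun Disjoint M) := fun i j hij => hdMM i j hij
  -- weights
  set w : ℕ → ℝ≥0∞ := fun j => ENNReal.ofReal (ε * (2⁻¹:ℝ) ^ j) with hwdef
  set e : ℝ≥0∞ := ENNReal.ofReal ε with hedef
  have he0 : e ≠ 0 := (ENNReal.ofReal_pos.mpr hε).ne'
  have heT : e ≠ ∞ := ENNReal.ofReal_ne_top
  set W : Ω → ℝ≥0∞ := fun ω => ∑' j, w j * ξ ω (M j) with hWdef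
  have hWmeas : Measurable W :=
    Measurable.ennreal_tsum fun j => (hξ.1 _ (hMm j)).const_mul _
  have hWint : ∫⁻ ω, W ω ∂P = ∑' j, w j * Λ (M j) := by
    rw [hWdef]
    rw [lintegral_tsum fun j => ((hξ.1 _ (hMm j)).const_mul _).aemeasurable]
    exact tsum_congr fun j => by rw [lintegral_const_mul _ (hξ.1 _ (hMm j)), hξ.mean (hMm j)]
  have hWbound : ∑' j, w j * Λ (M j) ≤ 2 * ∫⁻ y, min (ENNReal.ofReal |f y|) 1 ∂Λ := by
    have hterm : ∀ j, w j * Λ (M j) ≤ 2 * ∫⁻ y in M j, min (ENNReal.ofReal |f y|) 1 ∂Λ := by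
      intro j
      have hw2 : w j = 2 * ENNReal.ofReal (ε * (2⁻¹:ℝ) ^ (j+1)) := by
        rw [hwdef]
        rw [show (2:ℝ≥0∞) = ENNReal.ofReal (2:ℝ) by simp,
          ← ENNReal.ofReal_mul (by norm_num)]
        congr 1
        ring
      rw [hw2, mul_assoc]
      refine mul_le_mul_right ?_ 2
      calc ENNReal.ofReal (ε * (2⁻¹:ℝ) ^ (j+1)) * Λ (M j)
          = ∫⁻ _ in M j, ENNReal.ofReal (ε * (2⁻¹:ℝ) ^ (j+1)) ∂Λ := (setLIntegral_const _ _).symm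
        _ ≤ ∫⁻ y in M j, min (ENNReal.ofReal |f y|) 1 ∂Λ := by
            refine setLIntegral_mono hmin fun y hy => le_min ?_ ?_
            · refine ENNReal.ofReal_le_ofReal ?_
              exact le_trans (le_of_lt hy.1) (neg_le_abs _)
            · exact ENNReal.ofReal_le_one.mpr (le_trans (hpowle (j+1)) hε1)
    calc ∑' j, w j * Λ (M j)
        ≤ ∑' j, 2 * ∫⁻ y in M j, min (ENNReal.ofReal |f y|) 1 ∂Λ := ENNReal.tsum_le_tsum hterm
      _ = 2 * ∑' j, ∫⁻ y in M j, min (ENNReal.ofReal |f y|) 1 ∂Λ := ENNReal.tsum_mul_left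
      _ = 2 * ∫⁻ y in ⋃ j, M j, min (ENNReal.ofReal |f y|) 1 ∂Λ := by
          rw [lintegral_iUnion hMm hMdisj]
      _ ≤ 2 * ∫⁻ y, min (ENNReal.ofReal |f y|) 1 ∂Λ :=
          mul_le_mul_right (setLIntegral_le_lintegral _ _) 2
  have hWfin : ∀ᵐ ω ∂P, W ω < ∞ := by
    refine ae_lt_top hWmeas ?_
    rw [hWint]
    exact (hWbound.trans_lt (ENNReal.mul_lt_top (by norm_num) hint)).ne
  have hInt := hξ.ae_integrable hf hint
  -- the key a.e. exclusion
  have hae_not : ∀ n : ℕ, ∀ t : ℝ≥0∞, t < e * n →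
      ∀ᵐ ω ∂P, ¬ (ξ ω B = n ∧ ξ ω C = 0 ∧ W ω ≤ t) := by
    intro n t ht
    filter_upwards [hzero, hInt] with ω h0 hI
    rintro ⟨hBn, hC0, hWt⟩
    have hnorm : ∀ y : E, (‖f y‖₊ : ℝ≥0∞) = ENNReal.ofReal |f y| := by
      intro y
      exact (ofReal_norm (f y)).symm.trans (by rw [Real.norm_eq_abs])
    have habs_ne : ∫⁻ y, ENNReal.ofReal |f y| ∂(ξ ω) ≠ ∞ := by
      have h2 := hI.2
      rw [hasFiniteIntegral_iff_norm] at h2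
      simp only [Real.norm_eq_abs] at h2
      exact h2.ne
    have hfpos_ne : ∫⁻ y, ENNReal.ofReal (f y) ∂(ξ ω) ≠ ∞ :=
      ne_top_of_le_ne_top habs_ne
        (lintegral_mono fun y => ENNReal.ofReal_le_ofReal (le_abs_self _))
    have hfneg_ne : ∫⁻ y, ENNReal.ofReal (-f y) ∂(ξ ω) ≠ ∞ :=
      ne_top_of_le_ne_top habs_ne
        (lintegral_mono fun y => ENNReal.ofReal_le_ofReal (neg_le_abs _))
    have heq : ∫⁻ y, ENNReal.ofReal (f y) ∂(ξ ω) = ∫⁻ y, ENNReal.ofReal (-f y) ∂(ξ ω) := by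
      have h2 := integral_eq_lintegral_pos_part_sub_lintegral_neg_part hI
      rw [h0] at h2
      have h3 := sub_eq_zero.mp h2.symm
      exact (ENNReal.toReal_eq_toReal_iff' hfpos_ne hfneg_ne).mp h3
    have hge : e * n ≤ ∫⁻ y, ENNReal.ofReal (f y) ∂(ξ ω) := by
      calc e * (n : ℝ≥0∞) = ∫⁻ _ in B, e ∂(ξ ω) := by rw [setLIntegral_const, hBn]
        _ ≤ ∫⁻ y in B, ENNReal.ofReal (f y) ∂(ξ ω) := by
            refine setLIntegral_mono hf.ennreal_ofReal fun y hy => ?_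
            exact ENNReal.ofReal_le_ofReal (le_of_lt hy)
        _ ≤ ∫⁻ y, ENNReal.ofReal (f y) ∂(ξ ω) := setLIntegral_le_lintegral _ _
    have hptw : ∀ y, ENNReal.ofReal (-f y)
        ≤ C.indicator (fun _ => (∞:ℝ≥0∞)) y + ∑' j, (M j).indicator (fun _ => w j) y := by
      intro y
      by_cases hyC : y ∈ C
      · simp [Set.indicator_of_mem hyC]
      · by_cases hy0 : -f y ≤ 0
        · rw [ENNReal.ofReal_of_nonpos hy0]
          exact zero_le
        · push_neg at hy0
          have hyε : -f y ≤ ε := by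
            by_contra h
            exact hyC (by simpa [hCdef] using (not_le.mp h))
          have hex : ∃ j : ℕ, ε * (2⁻¹:ℝ) ^ (j+1) < -f y := by
            obtain ⟨m, hm⟩ := exists_pow_lt_of_lt_one (div_pos hy0 hε)
              (show (2⁻¹:ℝ) < 1 by norm_num)
            refine ⟨m, ?_⟩
            have h4 : ε * (2⁻¹:ℝ) ^ (m+1) ≤ ε * (2⁻¹:ℝ) ^ m := hpowmono m (m+1) (by omega)
            have h5 : ε * (2⁻¹:ℝ) ^ m < ε * (-f y / ε) := by
              exact mul_lt_mul_of_pos_left hm hε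
            rw [mul_div_cancel₀ _ hε.ne'] at h5
            linarith
          have hj1 : ε * (2⁻¹:ℝ) ^ (Nat.find hex + 1) < -f y := Nat.find_spec hex
          have hj2 : -f y ≤ ε * (2⁻¹:ℝ) ^ (Nat.find hex) := by
            rcases Nat.eq_zero_or_pos (Nat.find hex) with hzero' | hpos'
            · rw [hzero', pow_zero, mul_one]
              exact hyε
            · have hmin' := Nat.find_min hex (Nat.sub_lt hpos' one_pos)
              have heq' : Nat.find hex - 1 + 1 = Nat.find hex := by omega
              rw [heq'] at hmin'
              exact not_lt.mp hmin'
          have hymem : y ∈ M (Nat.find hex) := ⟨hj1, hj2⟩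
          calc ENNReal.ofReal (-f y) ≤ w (Nat.find hex) := ENNReal.ofReal_le_ofReal hj2
            _ = (M (Nat.find hex)).indicator (fun _ => w (Nat.find hex)) y :=
                (Set.indicator_of_mem hymem fun _ => w (Nat.find hex)).symm
            _ ≤ ∑' j, (M j).indicator (fun _ => w j) y := ENNReal.le_tsum (Nat.find hex)
            _ ≤ _ := le_add_self
    have hle : ∫⁻ y, ENNReal.ofReal (-f y) ∂(ξ ω) ≤ W ω := by
      calc ∫⁻ y, ENNReal.ofReal (-f y) ∂(ξ ω)
          ≤ ∫⁻ y, (C.indicator (fun _ => (∞:ℝ≥0∞)) y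
              + ∑' j, (M j).indicator (fun _ => w j) y) ∂(ξ ω) := lintegral_mono hptw
        _ = ∞ * ξ ω C + ∑' j, w j * ξ ω (M j) := by
            rw [lintegral_add_left (measurable_const.indicator hCm),
              lintegral_indicator_const hCm,
              lintegral_tsum fun j => (measurable_const.indicator (hMm j)).aemeasurable]
            congr 1
            exact tsum_congr fun j => lintegral_indicator_const (hMm j) _
        _ = W ω := by rw [hC0, mul_zero, zero_add, hWdef]
    have hfinal : e * n ≤ t := le_trans hge (le_trans (heq.le.trans hle) hWt)
    exact absurd hfinal (not_le.mpr ht)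
  -- partial sums
  set Wm : ℕ → Ω → ℝ≥0∞ := fun m ω => ∑ j ∈ Finset.range m, w j * ξ ω (M j) with hWmdef
  have hWsup : ∀ ω, W ω = ⨆ m, Wm m ω := fun ω => ENNReal.tsum_eq_iSup_nat
  have hWm_mono : ∀ ω, Monotone fun m => Wm m ω := fun ω a b hab =>
    Finset.sum_le_sum_of_subset (Finset.range_subset_range.mpr hab)
  set D : ℕ → Set Ω := fun n => {ω | ξ ω B = n} ∩ {ω | ξ ω C = 0} with hDdef
  have hDm : ∀ n : ℕ, MeasurableSet (D n) :=
    fun n => ((hξ.1 B hBm) (measurableSet_singleton _)).inter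
      ((hξ.1 C hCm) (measurableSet_singleton _))
  have hindep : ∀ (m n : ℕ) (t : ℝ≥0∞),
      P (D n ∩ {ω | t < Wm m ω}) = P (D n) * P {ω | t < Wm m ω} := by
    intro m n t
    set A : ℕ → Set E := fun i => if i = 0 then B else if i = 1 then C else M (i - 2) with hAdef
    have hA0 : A 0 = B := rfl
    have hA1 : A 1 = C := rfl
    have hA2 : ∀ j : ℕ, A (j + 2) = M j := fun j => rfl
    have hAmeas : ∀ i : ℕ, MeasurableSet (A i) := by
      intro i
      rw [hAdef]
      dsimp only
      split_ifs
      · exact hBm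
      · exact hCm
      · exact hMm _
    have hAdisj : ∀ a b : ℕ, a ≠ b → Disjoint (A a) (A b) := by
      intro a b hab
      rcases a with _ | _ | a <;> rcases b with _ | _ | b
      · exact absurd rfl hab
      · exact hdBC
      · exact hdBM b
      · exact hdBC.symm
      · exact absurd rfl hab
      · exact hdCM b
      · exact (hdBM a).symm
      · exact (hdCM a).symm
      · exact hdMM a b (by omega)
    have hfam := hξ.2.2 (m + 2) (fun i => A i.val)
      (fun i => hAmeas i.val)
      (fun i j hij => hAdisj i.val j.val (fun hv => hij (Fin.val_injective hv)))
    set S : Finset (Fin (m + 2)) := {0, 1} with hSdef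
    set T : Finset (Fin (m + 2)) := Finset.univ \ S with hTdef
    have hST : Disjoint S T := Finset.disjoint_sdiff
    have hIF := hfam.indepFun_finset S T hST (fun i => hξ.1 _ (hAmeas i.val))
    have h0S : (0 : Fin (m + 2)) ∈ S := by simp [hSdef]
    have h1S : (1 : Fin (m + 2)) ∈ S := by simp [hSdef]
    set φ : ({x // x ∈ S} → ℝ≥0∞) → ℝ≥0∞ × ℝ≥0∞ :=
      fun v => (v ⟨0, h0S⟩, v ⟨1, h1S⟩) with hφdef
    have hφ : Measurable φ := (measurable_pi_apply _).prodMk (measurable_pi_apply _)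
    set ψ : ({x // x ∈ T} → ℝ≥0∞) → ℝ≥0∞ :=
      fun v => ∑ i : {x // x ∈ T}, w ((i : Fin (m + 2)).val - 2) * v i with hψdef
    have hψ : Measurable ψ :=
      Finset.measurable_sum _ fun i _ => (measurable_pi_apply i).const_mul _
    have hkey := ((hIF.comp hφ hψ).measure_inter_preimage_eq_mul
      (s := {((n : ℝ≥0∞), (0 : ℝ≥0∞))}) (t := Set.Ioi t)
      (measurableSet_singleton _) measurableSet_Ioi)
    have hψval : ∀ ω, ψ (fun i : {x // x ∈ T} => ξ ω (A ((i : Fin (m + 2))).val)) = Wm m ω := by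
      intro ω
      rw [hψdef]
      dsimp only
      rw [Finset.sum_coe_sort T (fun i => w (i.val - 2) * ξ ω (A i.val))]
      have hTfilt : T = Finset.univ.filter (fun i => i ∉ S) := by
        rw [hTdef, Finset.sdiff_eq_filter]
      rw [hTfilt, Finset.sum_filter]
      rw [Fin.sum_univ_succ, Fin.sum_univ_succ]
      have hz0 : (if (0 : Fin (m + 2)) ∉ S then
          w ((0 : Fin (m + 2)).val - 2) * ξ ω (A (0 : Fin (m + 2)).val) else 0) = 0 := by
        simp [h0S]
      have hz1 : (if ((0 : Fin (m + 1)).succ) ∉ S then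
          w (((0 : Fin (m + 1)).succ).val - 2) * ξ ω (A ((0 : Fin (m + 1)).succ).val) else 0)
          = 0 := by
        simp [Fin.succ_zero_eq_one, h1S]
      rw [hz0, hz1, zero_add, zero_add]
      have hterm : ∀ i : Fin m, (if (i.succ.succ) ∉ S then
          w ((i.succ.succ).val - 2) * ξ ω (A (i.succ.succ).val) else 0)
          = w i.val * ξ ω (M i.val) := by
        intro i
        have hns : i.succ.succ ∉ S := by
          simp only [hSdef, Finset.mem_insert, Finset.mem_singleton]
          push_neg
          exact ⟨Fin.succ_ne_zero _, Fin.succ_succ_ne_one i⟩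
        rw [if_pos hns]
        have hval : (i.succ.succ).val = i.val + 2 := by simp [Fin.val_succ]
        rw [hval]
        congr 1
      rw [Finset.sum_congr rfl fun i _ => hterm i]
      rw [Fin.sum_univ_eq_sum_range (fun j => w j * ξ ω (M j)) m]
    rw [show (Wm m) = fun ω => Wm m ω from rfl] at *
    convert hkey using 2
    · ext ω
      simp only [Set.mem_inter_iff, Set.mem_preimage, Function.comp_apply, hφdef,
        Set.mem_singleton_iff, Prod.ext_iff, hDdef, Set.mem_setOf_eq]
      constructor
      · rintro ⟨⟨h1, h2⟩, h3⟩
        refine ⟨⟨?_, ?_⟩, ?_⟩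
        · simpa [Fin.val_zero, hA0] using h1
        · simpa [Fin.val_one, hA1] using h2
        · simpa [hψval ω] using h3
      · rintro ⟨⟨h1, h2⟩, h3⟩
        refine ⟨⟨?_, ?_⟩, ?_⟩
        · simpa [Fin.val_zero, hA0] using h1
        · simpa [Fin.val_one, hA1] using h2
        · simpa [hψval ω] using h3
    · congr 1
      ext ω
      simp only [Set.mem_preimage, Function.comp_apply, hφdef, Set.mem_singleton_iff,
        Prod.ext_iff, hDdef, Set.mem_setOf_eq, Set.mem_inter_iff]
      constructor
      · rintro ⟨h1, h2⟩
        exact ⟨by simpa [Fin.val_zero, hA0] using h1, by simpa [Fin.val_one, hA1] using h2⟩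
      · rintro ⟨h1, h2⟩
        exact ⟨by simpa [Fin.val_zero, hA0] using h1, by simpa [Fin.val_one, hA1] using h2⟩
    · congr 1
      ext ω
      simp only [Set.mem_preimage, Function.comp_apply, Set.mem_Ioi, Set.mem_setOf_eq]
      rw [hψval ω]
  have hWmmeas : ∀ m, Measurable (Wm m) := fun m =>
    Finset.measurable_sum _ fun j _ => (hξ.1 _ (hMm j)).const_mul _
  have hlimit : ∀ (n : ℕ) (t : ℝ≥0∞),
      P (D n ∩ {ω | t < W ω}) = P (D n) * P {ω | t < W ω} := by
    intro n t
    have hUnion : ∀ s : Set Ω, s ∩ {ω | t < W ω} = ⋃ m, s ∩ {ω | t < Wm m ω} := by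
      intro s
      rw [← Set.inter_iUnion]
      congr 1
      ext ω
      simp only [Set.mem_setOf_eq, Set.mem_iUnion]
      rw [hWsup ω, lt_iSup_iff]
    have hdir : ∀ s : Set Ω, Monotone fun m => s ∩ {ω | t < Wm m ω} := fun s a b hab =>
      Set.inter_subset_inter_right _ fun ω hω => lt_of_lt_of_le hω (hWm_mono ω hab)
    calc P (D n ∩ {ω | t < W ω}) = P (⋃ m, D n ∩ {ω | t < Wm m ω}) := by rw [← hUnion]
      _ = ⨆ m, P (D n ∩ {ω | t < Wm m ω}) :=
          Directed.measure_iUnion (hdir (D n)).directed_le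
      _ = ⨆ m, P (D n) * P {ω | t < Wm m ω} := by simp only [hindep]
      _ = P (D n) * ⨆ m, P {ω | t < Wm m ω} := by rw [ENNReal.mul_iSup]
      _ = P (D n) * ⨆ m, P (Set.univ ∩ {ω | t < Wm m ω}) := by
          simp only [Set.univ_inter]
      _ = P (D n) * P (⋃ m, Set.univ ∩ {ω | t < Wm m ω}) := by
          rw [Directed.measure_iUnion (hdir Set.univ).directed_le]
      _ = P (D n) * P {ω | t < W ω} := by rw [← hUnion, Set.univ_inter]
  have hcompl : ∀ (n : ℕ) (t : ℝ≥0∞),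
      P (D n ∩ {ω | W ω ≤ t}) = P (D n) * P {ω | W ω ≤ t} := by
    intro n t
    have hle_m : MeasurableSet {ω | W ω ≤ t} := hWmeas measurableSet_Iic
    have hdiffeq : D n \ {ω | W ω ≤ t} = D n ∩ {ω | t < W ω} := by
      rw [Set.diff_eq]
      congr 1
      ext ω
      simp [not_le]
    have h1 : P (D n ∩ {ω | W ω ≤ t}) + P (D n ∩ {ω | t < W ω}) = P (D n) := by
      rw [← hdiffeq]
      exact measure_inter_add_diff _ hle_m
    have h2 : P {ω | W ω ≤ t} + P {ω | t < W ω} = 1 := by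
      have := measure_add_measure_compl (μ := P) hle_m
      rw [show {ω | W ω ≤ t}ᶜ = {ω | t < W ω} by ext ω; simp [not_le]] at this
      rw [this, measure_univ]
    rw [hlimit] at h1
    have h3 : P (D n) * P {ω | W ω ≤ t} + P (D n) * P {ω | t < W ω} = P (D n) := by
      rw [← mul_add, h2, mul_one]
    exact WithTop.add_right_cancel
      (ENNReal.mul_ne_top (measure_ne_top P _) (measure_ne_top P _)) (h1.trans h3.symm)
  -- positivity of D n
  have hDval : ∀ n : ℕ, P (D n) = poissonProb (Λ B) n * poissonProb (Λ C) 0 := by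
    intro n
    have hfam2 := hξ.2.2 2 ![B, C]
      (by intro i; fin_cases i
          · exact hBm
          · exact hCm)
      (by intro i j hij
          fin_cases i <;> fin_cases j
          · exact absurd rfl hij
          · exact hdBC
          · exact hdBC.symm
          · exact absurd rfl hij)
    have hIF2 : IndepFun (fun ω => ξ ω B) (fun ω => ξ ω C) P :=
      hfam2.indepFun (show (0 : Fin 2) ≠ 1 by decide)
    have hkey := hIF2.measure_inter_preimage_eq_mul (s := {(n : ℝ≥0∞)}) (t := {(0 : ℝ≥0∞)})
      (measurableSet_singleton _) (measurableSet_singleton _)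
    have hp1 : (fun ω => ξ ω B) ⁻¹' {(n : ℝ≥0∞)} = {ω | ξ ω B = n} := rfl
    have hp2 : (fun ω => ξ ω C) ⁻¹' {(0 : ℝ≥0∞)} = {ω | ξ ω C = 0} := rfl
    rw [hp1, hp2] at hkey
    rw [hDdef]
    dsimp only
    rw [hkey, (hξ.2.1 B hBm).1 n]
    congr 1
    simpa using (hξ.2.1 C hCm).1 0
  -- choose m0
  have hq : ∃ m0 : ℕ, 0 < P {ω | W ω ≤ e * ((m0 + 1 : ℕ) : ℝ≥0∞)} := by
    by_contra hcon
    push_neg at hcon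
    have hzero' : ∀ m0 : ℕ, P {ω | W ω ≤ e * ((m0 + 1 : ℕ) : ℝ≥0∞)} = 0 :=
      fun m0 => le_antisymm (hcon m0) zero_le
    have hmem : ∀ᵐ ω ∂P, ω ∈ ⋃ m0 : ℕ, {ω | W ω ≤ e * ((m0 + 1 : ℕ) : ℝ≥0∞)} := by
      filter_upwards [hWfin] with ω hW
      obtain ⟨k, hk⟩ := ENNReal.exists_nat_gt hW.ne
      have hec : (1:ℝ≥0∞) ≤ e * (⌈ε⁻¹⌉₊ : ℝ≥0∞) := by
        rw [hedef, ← ENNReal.ofReal_natCast, ← ENNReal.ofReal_mul hε.le, ← ENNReal.ofReal_one]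
        refine ENNReal.ofReal_le_ofReal ?_
        calc (1:ℝ) = ε * ε⁻¹ := (mul_inv_cancel₀ hε.ne').symm
          _ ≤ ε * ⌈ε⁻¹⌉₊ := mul_le_mul_of_nonneg_left (Nat.le_ceil _) hε.le
      refine Set.mem_iUnion.mpr ⟨k * ⌈ε⁻¹⌉₊, ?_⟩
      simp only [Set.mem_setOf_eq]
      calc W ω ≤ (k:ℝ≥0∞) := hk.le
        _ ≤ (e * (⌈ε⁻¹⌉₊ : ℝ≥0∞)) * k := by
            nth_rewrite 1 [← one_mul (k:ℝ≥0∞)]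
            exact mul_le_mul_left hec _
        _ ≤ e * ((k * ⌈ε⁻¹⌉₊ + 1 : ℕ) : ℝ≥0∞) := by
            rw [mul_assoc]
            refine mul_le_mul_right ?_ e
            push_cast
            calc ((⌈ε⁻¹⌉₊ : ℝ≥0∞)) * k = (k:ℝ≥0∞) * ⌈ε⁻¹⌉₊ := mul_comm _ _
              _ ≤ (k:ℝ≥0∞) * ⌈ε⁻¹⌉₊ + 1 := le_self_add
    have h0 : P (⋃ m0 : ℕ, {ω | W ω ≤ e * ((m0 + 1 : ℕ) : ℝ≥0∞)}) = 0 :=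
      measure_iUnion_null fun m0 => hzero' m0
    rw [ae_iff] at hmem
    have hcup := measure_union_le (μ := P)
      (⋃ m0 : ℕ, {ω | W ω ≤ e * ((m0 + 1 : ℕ) : ℝ≥0∞)})
      (⋃ m0 : ℕ, {ω | W ω ≤ e * ((m0 + 1 : ℕ) : ℝ≥0∞)})ᶜ
    rw [Set.union_compl_self, measure_univ, h0, zero_add, Set.compl_def] at hcup
    rw [hmem] at hcup
    exact absurd hcup (by norm_num)
  obtain ⟨m0, hm0⟩ := hq
  set n := 2 * (m0 + 1) with hndef
  have htlt : e * ((m0 + 1 : ℕ) : ℝ≥0∞) < e * (n : ℝ≥0∞) := by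
    rw [ENNReal.mul_lt_mul_iff_right he0 heT]
    exact_mod_cast (by omega : m0 + 1 < 2 * (m0 + 1))
  have hnull : P (D n ∩ {ω | W ω ≤ e * ((m0 + 1 : ℕ) : ℝ≥0∞)}) = 0 := by
    have hae := hae_not n (e * ((m0 + 1 : ℕ) : ℝ≥0∞)) htlt
    rw [ae_iff] at hae
    refine measure_mono_null ?_ hae
    intro ω hω
    simp only [Set.mem_setOf_eq, not_not]
    obtain ⟨⟨h1, h2⟩, h3⟩ := hω
    exact ⟨h1, h2, h3⟩
  have hpos : 0 < P (D n ∩ {ω | W ω ≤ e * ((m0 + 1 : ℕ) : ℝ≥0∞)}) := by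
    rw [hcompl, hDval]
    refine ENNReal.mul_pos (ENNReal.mul_pos ?_ ?_).ne' hm0.ne'
    · exact (poissonProb_pos hB0 hΛB.ne n).ne'
    · exact (poissonProb_zero_pos hΛC.ne).ne'
  exact absurd hnull hpos.ne'

/-- **Uniqueness of Poisson integrals.** If `Λ` is s-finite, `ξ` a Poisson point process
with mean measure `Λ`, and `f` measurable with `∫ (|f| ∧ 1) dΛ < ∞`, then
`∫ f dξ = 0` a.s. iff `f = 0` `Λ`-a.e. -/
theorem poisson_integral_zero_iff {Ω E : Type*} [MeasurableSpace Ω] [MeasurableSpace E]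
    (P : Measure Ω) [IsProbabilityMeasure P] (Λ : Measure E) [SFinite Λ]
    (ξ : Ω → Measure E) (hξ : IsPoissonPP P ξ Λ)
    (f : E → ℝ) (hf : Measurable f)
    (hint : ∫⁻ y, min (ENNReal.ofReal |f y|) 1 ∂Λ < ∞) :
    (∀ᵐ ω ∂P, ∫ y, f y ∂(ξ ω) = 0) ↔ (∀ᵐ y ∂Λ, f y = 0) := by
  constructor
  · intro h
    rw [ae_iff]
    have hsub : {y | ¬ f y = 0}
        ⊆ (⋃ n : ℕ, {y | 1 / ((n : ℝ) + 1) < f y})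
          ∪ (⋃ n : ℕ, {y | 1 / ((n : ℝ) + 1) < -f y}) := by
      intro y hy
      rcases lt_or_gt_of_ne (hy : f y ≠ 0) with hneg | hpos
      · right
        obtain ⟨n, hn⟩ := exists_nat_one_div_lt (show (0:ℝ) < -f y by linarith)
        exact Set.mem_iUnion.mpr ⟨n, hn⟩
      · left
        obtain ⟨n, hn⟩ := exists_nat_one_div_lt hpos
        exact Set.mem_iUnion.mpr ⟨n, hn⟩
    have hε : ∀ n : ℕ, (0:ℝ) < 1 / ((n : ℝ) + 1) := fun n => by positivity
    have hε1 : ∀ n : ℕ, 1 / ((n : ℝ) + 1) ≤ 1 := fun n => by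
      rw [div_le_one (by positivity)]
      linarith [Nat.cast_nonneg (α := ℝ) n]
    refine measure_mono_null hsub (measure_union_null ?_ ?_)
    · exact measure_iUnion_null fun n => aux_pos hξ hf hint h (hε n) (hε1 n)
    · refine measure_iUnion_null fun n => ?_
      have hint' : ∫⁻ y, min (ENNReal.ofReal |(fun y => -f y) y|) 1 ∂Λ < ∞ := by
        simpa [abs_neg] using hint
      have h' : ∀ᵐ ω ∂P, ∫ y, (fun y => -f y) y ∂(ξ ω) = 0 := by
        filter_upwards [h] with ω hω
        simpa [integral_neg] using hω
      exact aux_pos hξ hf.neg hint' h' (hε n) (hε1 n)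
  · intro h
    have hA : MeasurableSet {y | f y ≠ 0} := (hf (measurableSet_singleton 0)).compl
    have hΛA : Λ {y | f y ≠ 0} = 0 := by
      rw [ae_iff] at h
      exact h
    have hone : P {ω | ξ ω {y | f y ≠ 0} = 0} = 1 := by
      have hP := (hξ.2.1 _ hA).1 0
      rw [hΛA] at hP
      simpa [poissonProb_zero_zero] using hP
    have hmsb : MeasurableSet {ω | ξ ω {y | f y ≠ 0} = 0} :=
      (hξ.1 _ hA) (measurableSet_singleton 0)
    have hae : ∀ᵐ ω ∂P, ξ ω {y | f y ≠ 0} = 0 := by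
      rw [ae_iff]
      have hc := measure_compl hmsb (measure_ne_top P _)
      rw [hone, measure_univ, tsub_self] at hc
      exact hc
    filter_upwards [hae] with ω hω
    refine integral_eq_zero_of_ae ?_
    rw [Filter.EventuallyEq, ae_iff]
    simpa using hω
end

section
/- Let Λ°₁₂₃ be a measure on the punctured product space E₁₂₃° = (E₁ × E₂ × E₃) \ {(o₁, o₂, o₃)} with Λ°₁₂₃(E₁₂₃°) = ∞, and assume Λ°₁₂₃(y₁ ≠ o₁, y₂ ≠ o₂) = 0 and suppose the marginal Λ°ⱼ (restriction of the j-th marginal to Eⱼ \ {oⱼ}) is locally finite and Λ°₁₂₃(yⱼ = oⱼ) ∈ {0, ∞} for j = 1, 2. If ξ is a Poisson point process with mean measure Λ°₁₂₃ and ξⱼ its projection onto Eⱼ, then ξ₁ and ξ₂ are independent. -/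
open MeasureTheory ProbabilityTheory ENNReal

lemma atoms_spec {E : Type*} [MeasurableSpace E] (S : Set E) (hS : MeasurableSet S)
    (F : Finset (Set E)) (hF : ∀ A ∈ F, MeasurableSet A ∧ A ⊆ S) :
    ∃ at_ : (↥F → Bool) → Set E,
      (∀ σ, MeasurableSet (at_ σ) ∧ at_ σ ⊆ S) ∧
      (Pairwise (Function.onFun Disjoint at_)) ∧
      (∀ a : ↥F, (↑a : Set E) = ⋃ σ : {σ : ↥F → Bool // σ a = true}, at_ σ.1) := by
  classical
  set at_ : (↥F → Bool) → Set E :=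
    fun σ => S ∩ ⋂ (A : ↥F), (if σ A then (A : Set E) else (↑A : Set E)ᶜ) with hat
  have hmeas : ∀ σ, MeasurableSet (at_ σ) := by
    intro σ
    refine hS.inter (MeasurableSet.iInter fun A => ?_)
    by_cases h : σ A <;> simp [h, (hF A A.2).1, (hF A A.2).1.compl]
  have hdisj : Pairwise (Function.onFun Disjoint at_) := by
    intro σ τ hst
    have : ∃ A : ↥F, σ A ≠ τ A := by
      by_contra h
      push_neg at h
      exact hst (funext h)
    obtain ⟨A, hA⟩ := this
    refine Set.disjoint_left.2 fun x hx hx' => ?_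
    have h1 := Set.mem_iInter.1 hx.2 A
    have h2 := Set.mem_iInter.1 hx'.2 A
    cases h : σ A <;> cases h' : τ A <;> simp_all
  refine ⟨at_, fun σ => ⟨hmeas σ, Set.inter_subset_left⟩, hdisj, ?_⟩
  intro a
  ext x
  simp only [Set.mem_iUnion]
  constructor
  · intro hx
    refine ⟨⟨fun B => decide (x ∈ (B : Set E)), by simp [hx]⟩, (hF _ a.2).2 hx, ?_⟩
    refine Set.mem_iInter.2 fun B => ?_
    by_cases h : x ∈ (B : Set E) <;> simp [h]
  · rintro ⟨⟨σ, hσ⟩, _, hx⟩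
    have := Set.mem_iInter.1 hx a
    rwa [if_pos hσ] at this

/-- σ-algebra on Ω generated by the counts of measurable subsets of `S`. -/
def countSigma {Ω E : Type*} [MeasurableSpace Ω] [MeasurableSpace E]
    (ξ : Ω → Measure E) (S : Set E) : MeasurableSpace Ω :=
  ⨆ A ∈ {A : Set E | MeasurableSet A ∧ A ⊆ S},
    MeasurableSpace.comap (fun ω => ξ ω A) inferInstance

lemma indep_countSigma {Ω E : Type*} [MeasurableSpace Ω] [MeasurableSpace E]
    (P : Measure Ω) [IsProbabilityMeasure P] (Λ : Measure E) (ξ : Ω → Measure E)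
    (hξ : IsPoissonPP P ξ Λ) {S₁ S₂ : Set E}
    (h₁ : MeasurableSet S₁) (h₂ : MeasurableSet S₂) (hd : Disjoint S₁ S₂) :
    Indep (countSigma ξ S₁) (countSigma ξ S₂) P := by
  classical
  set m : Set E → MeasurableSpace Ω :=
    fun A => MeasurableSpace.comap (fun ω => ξ ω A) inferInstance with hm
  set I₁ := {A : Set E | MeasurableSet A ∧ A ⊆ S₁} with hI₁
  set I₂ := {A : Set E | MeasurableSet A ∧ A ⊆ S₂} with hI₂
  have hgen₁ : countSigma ξ S₁ =
      MeasurableSpace.generateFrom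
        (piiUnionInter (fun A => {s | MeasurableSet[m A] s}) I₁) :=
    (generateFrom_piiUnionInter_measurableSet m I₁).symm
  have hgen₂ : countSigma ξ S₂ =
      MeasurableSpace.generateFrom
        (piiUnionInter (fun A => {s | MeasurableSet[m A] s}) I₂) :=
    (generateFrom_piiUnionInter_measurableSet m I₂).symm
  have hle : ∀ S : Set E, countSigma ξ S ≤ ‹MeasurableSpace Ω› := by
    intro S
    exact iSup₂_le fun A hA => (hξ.1 A hA.1).comap_le
  have hpi : ∀ A : Set E, IsPiSystem {s | MeasurableSet[m A] s} := by
    intro A s hs t ht _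
    exact @MeasurableSet.inter Ω (m A) _ _ hs ht
  refine IndepSets.indep (hle S₁) (hle S₂)
    (isPiSystem_piiUnionInter _ hpi I₁)
    (isPiSystem_piiUnionInter _ hpi I₂)
    hgen₁ hgen₂ ?_
  rw [IndepSets_iff]
  rintro t1 t2 ⟨F₁, hF₁S, f₁, hf₁, rfl⟩ ⟨F₂, hF₂S, f₂, hf₂, rfl⟩
  have hf₁' : ∀ a : ↥F₁, ∃ B : Set ℝ≥0∞, MeasurableSet B ∧
      (fun ω => ξ ω ↑a) ⁻¹' B = f₁ ↑a := fun a => hf₁ ↑a a.2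
  have hf₂' : ∀ a : ↥F₂, ∃ B : Set ℝ≥0∞, MeasurableSet B ∧
      (fun ω => ξ ω ↑a) ⁻¹' B = f₂ ↑a := fun a => hf₂ ↑a a.2
  choose B₁ hB₁ hB₁e using hf₁'
  choose B₂ hB₂ hB₂e using hf₂'
  obtain ⟨at₁, hat₁, hdisj₁, hrep₁⟩ := atoms_spec S₁ h₁ F₁ (fun A hA => hF₁S hA)
  obtain ⟨at₂, hat₂, hdisj₂, hrep₂⟩ := atoms_spec S₂ h₂ F₂ (fun A hA => hF₂S hA)
  set C : ((↥F₁ → Bool) ⊕ (↥F₂ → Bool)) → Set E := Sum.elim at₁ at₂ with hC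
  have hCmeas : ∀ i, MeasurableSet (C i) := by
    rintro (σ | τ)
    exacts [(hat₁ σ).1, (hat₂ τ).1]
  have hCdisj : Pairwise (Function.onFun Disjoint C) := by
    rintro (σ | σ) (τ | τ) hne
    · exact hdisj₁ (fun h => hne (by rw [h]))
    · exact hd.mono (hat₁ σ).2 (hat₂ τ).2
    · exact (hd.mono (hat₁ τ).2 (hat₂ σ).2).symm
    · exact hdisj₂ (fun h => hne (by rw [h]))
  set n := Fintype.card ((↥F₁ → Bool) ⊕ (↥F₂ → Bool)) with hn
  set e : Fin n ≃ ((↥F₁ → Bool) ⊕ (↥F₂ → Bool)) :=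
    (Fintype.equivFin _).symm with he
  have hind := hξ.2.2 n (fun i => C (e i)) (fun i => hCmeas _)
    (fun i j hij => hCdisj (e.injective.ne hij))
  have hmeasf : ∀ i, Measurable fun ω => ξ ω (C (e i)) := fun i => hξ.1 _ (hCmeas _)
  set Sf : Finset (Fin n) := Finset.univ.filter (fun i => (e i).isLeft) with hSf
  set Tf : Finset (Fin n) := Finset.univ.filter (fun i => (e i).isRight) with hTf
  have hST : Disjoint Sf Tf := by
    rw [Finset.disjoint_left]
    intro i hi hi'
    simp only [hSf, hTf, Finset.mem_filter, Finset.mem_univ, true_and] at hi hi'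
    cases h : e i <;> simp [h] at hi hi'
  have hIF := hind.indepFun_finset Sf Tf hST hmeasf
  rw [indepFun_iff_measure_inter_preimage_eq_mul] at hIF
  set g : ↥F₁ → ((↥Sf → ℝ≥0∞) → ℝ≥0∞) :=
    fun a v => ∑' σ : {σ : ↥F₁ → Bool // σ a = true},
      v ⟨e.symm (Sum.inl σ.1), by simp [hSf, Finset.mem_filter]⟩ with hg
  set g' : ↥F₂ → ((↥Tf → ℝ≥0∞) → ℝ≥0∞) :=
    fun a v => ∑' σ : {σ : ↥F₂ → Bool // σ a = true},
      v ⟨e.symm (Sum.inr σ.1), by simp [hTf, Finset.mem_filter]⟩ with hg'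
  have hg_meas : ∀ a, Measurable (g a) :=
    fun a => Measurable.ennreal_tsum fun σ => measurable_pi_apply _
  have hg'_meas : ∀ a, Measurable (g' a) :=
    fun a => Measurable.ennreal_tsum fun σ => measurable_pi_apply _
  have hg_key : ∀ (ω : Ω) (a : ↥F₁), ξ ω ↑a = g a (fun i : ↥Sf => ξ ω (C (e i))) := by
    intro ω a
    have hμU : ξ ω (⋃ σ : {σ : ↥F₁ → Bool // σ a = true}, at₁ σ.1)
        = ∑' σ : {σ : ↥F₁ → Bool // σ a = true}, ξ ω (at₁ σ.1) := by
      refine measure_iUnion ?_ fun σ => (hat₁ σ.1).1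
      intro σ τ hst
      exact hdisj₁ fun h => hst (Subtype.ext h)
    rw [hrep₁ a, hμU]
    simp only [hg]
    refine tsum_congr fun σ => ?_
    simp [hC]
  have hg'_key : ∀ (ω : Ω) (a : ↥F₂), ξ ω ↑a = g' a (fun i : ↥Tf => ξ ω (C (e i))) := by
    intro ω a
    have hμU : ξ ω (⋃ σ : {σ : ↥F₂ → Bool // σ a = true}, at₂ σ.1)
        = ∑' σ : {σ : ↥F₂ → Bool // σ a = true}, ξ ω (at₂ σ.1) := by
      refine measure_iUnion ?_ fun σ => (hat₂ σ.1).1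
      intro σ τ hst
      exact hdisj₂ fun h => hst (Subtype.ext h)
    rw [hrep₂ a, hμU]
    simp only [hg']
    refine tsum_congr fun σ => ?_
    simp [hC]
  set M₁ : Set (↥Sf → ℝ≥0∞) := ⋂ a : ↥F₁, g a ⁻¹' (B₁ a) with hM₁def
  set M₂ : Set (↥Tf → ℝ≥0∞) := ⋂ a : ↥F₂, g' a ⁻¹' (B₂ a) with hM₂def
  have hM₁ : MeasurableSet M₁ := MeasurableSet.iInter fun a => (hg_meas a) (hB₁ a)
  have hM₂ : MeasurableSet M₂ := MeasurableSet.iInter fun a => (hg'_meas a) (hB₂ a)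
  have ht1 : (⋂ A ∈ F₁, f₁ A) = (fun ω (i : ↥Sf) => ξ ω (C (e i))) ⁻¹' M₁ := by
    ext ω
    simp only [Set.mem_iInter, Set.mem_preimage, hM₁def]
    constructor
    · intro hω a
      have h : ξ ω ↑a ∈ B₁ a := by
        have h2 := hω ↑a a.2
        rw [← hB₁e a] at h2
        exact h2
      rw [← hg_key ω a]
      exact h
    · intro hω A hA
      have h := hω ⟨A, hA⟩
      rw [← hg_key ω ⟨A, hA⟩] at h
      have h3 : ω ∈ (fun ω => ξ ω ↑(⟨A, hA⟩ : ↥F₁)) ⁻¹' B₁ ⟨A, hA⟩ := h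
      rw [hB₁e ⟨A, hA⟩] at h3
      exact h3
  have ht2 : (⋂ A ∈ F₂, f₂ A) = (fun ω (i : ↥Tf) => ξ ω (C (e i))) ⁻¹' M₂ := by
    ext ω
    simp only [Set.mem_iInter, Set.mem_preimage, hM₂def]
    constructor
    · intro hω a
      have h : ξ ω ↑a ∈ B₂ a := by
        have h2 := hω ↑a a.2
        rw [← hB₂e a] at h2
        exact h2
      rw [← hg'_key ω a]
      exact h
    · intro hω A hA
      have h := hω ⟨A, hA⟩
      rw [← hg'_key ω ⟨A, hA⟩] at h
      have h3 : ω ∈ (fun ω => ξ ω ↑(⟨A, hA⟩ : ↥F₂)) ⁻¹' B₂ ⟨A, hA⟩ := h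
      rw [hB₂e ⟨A, hA⟩] at h3
      exact h3
  rw [ht1, ht2]
  exact hIF M₁ M₂ hM₁ hM₂

lemma le_countSigma {Ω E : Type*} [MeasurableSpace Ω] [MeasurableSpace E]
    (ξ : Ω → Measure E) {S A : Set E} (hA : MeasurableSet A) (hAS : A ⊆ S) :
    MeasurableSpace.comap (fun ω => ξ ω A) inferInstance ≤ countSigma ξ S :=
  le_iSup₂ (f := fun (B : Set E) (_ : B ∈ {B : Set E | MeasurableSet B ∧ B ⊆ S}) =>
    MeasurableSpace.comap (fun ω => ξ ω B) inferInstance) A ⟨hA, hAS⟩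


lemma ae_count_eq {Ω E : Type*} [MeasurableSpace Ω] [MeasurableSpace E]
    {P : Measure Ω} [IsProbabilityMeasure P] {Λ : Measure E} {ξ : Ω → Measure E}
    (hξ : IsPoissonPP P ξ Λ) {A : Set E} (hA : MeasurableSet A)
    (hΛ : Λ A = 0 ∨ Λ A = ∞) : ∀ᵐ ω ∂P, ξ ω A = Λ A := by
  rcases hΛ with h | h
  · have h0 := (hξ.2.1 A hA).1 0
    rw [h] at h0
    simp only [Nat.cast_zero] at h0
    have h1 : poissonProb 0 0 = 1 := by norm_num [poissonProb]
    rw [h1] at h0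
    have hms : MeasurableSet {ω | ξ ω A = 0} := hξ.1 A hA (measurableSet_singleton 0)
    have hc : P {ω | ξ ω A = 0}ᶜ = 0 := by
      rw [measure_compl hms (measure_ne_top _ _), h0, measure_univ, tsub_self]
    rw [h, ae_iff]
    exact hc
  · have h2 := (hξ.2.1 A hA).2 h
    rw [h]
    exact h2

section Proj
variable {E₁ E₂ E₃ : Type*} [MeasurableSpace E₁] [MeasurableSpace E₂] [MeasurableSpace E₃]
  [MeasurableSingletonClass E₁] [MeasurableSingletonClass E₂]

lemma proj2_formula (μ : Measure (E₁ × E₂ × E₃)) (o₂ : E₂) (c₂ : ℝ≥0∞)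
    (h2 : μ {p : E₁ × E₂ × E₃ | p.2.1 = o₂} = c₂) :
    μ.map (fun p => p.2.1) =
      (μ.restrict {p : E₁ × E₂ × E₃ | p.2.1 = o₂}ᶜ).map (fun p => p.2.1)
        + c₂ • Measure.dirac o₂ := by
  have pm : Measurable fun p : E₁ × E₂ × E₃ => p.2.1 := measurable_fst.comp measurable_snd
  have hT₂ : MeasurableSet {p : E₁ × E₂ × E₃ | p.2.1 = o₂} :=
    pm (measurableSet_singleton o₂)
  ext B hB
  set T₂ := {p : E₁ × E₂ × E₃ | p.2.1 = o₂} with hT₂def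
  set X := (fun p : E₁ × E₂ × E₃ => p.2.1) ⁻¹' B with hXdef
  have hX : MeasurableSet X := pm hB
  have hXsplit : μ X = μ (X ∩ T₂ᶜ) + μ (X ∩ T₂) := by
    conv_lhs => rw [← Set.inter_union_compl X T₂]
    rw [Set.union_comm, measure_union ?_ (hX.inter hT₂)]
    exact Set.disjoint_left.2 fun p hp hp' => hp.2 hp'.2
  have hend : μ (X ∩ T₂) = c₂ * Measure.dirac o₂ B := by
    rw [Measure.dirac_apply' _ hB]
    by_cases ho : o₂ ∈ B
    · have hXT : X ∩ T₂ = T₂ := Set.inter_eq_right.2 fun p hp => by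
        simp only [hXdef, Set.mem_preimage]
        rw [show p.2.1 = o₂ from hp]
        exact ho
      rw [hXT, h2, Set.indicator_of_mem ho, Pi.one_apply, mul_one]
    · have hXT : X ∩ T₂ = ∅ := by
        ext p
        simp only [Set.mem_inter_iff, Set.mem_empty_iff_false, iff_false]
        rintro ⟨hp, hp'⟩
        exact ho (by rw [← show p.2.1 = o₂ from hp']; exact hp)
      rw [hXT, Set.indicator_of_notMem ho, measure_empty, mul_zero]
  rw [Measure.map_apply pm hB, Measure.add_apply,
    Measure.map_apply pm hB, Measure.restrict_apply hX, Measure.smul_apply, smul_eq_mul]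
  rw [hXsplit, hend]

lemma proj1_formula (μ : Measure (E₁ × E₂ × E₃)) (o₁ : E₁) (o₂ : E₂) (c₁ : ℝ≥0∞)
    (h0 : μ {p : E₁ × E₂ × E₃ | p.1 ≠ o₁ ∧ p.2.1 ≠ o₂} = 0)
    (h1 : μ {p : E₁ × E₂ × E₃ | p.1 = o₁} = c₁) :
    μ.map (fun p => p.1) =
      (μ.restrict ({p : E₁ × E₂ × E₃ | p.1 = o₁}ᶜ ∩ {p : E₁ × E₂ × E₃ | p.2.1 = o₂})).map
          (fun p => p.1)
        + c₁ • Measure.dirac o₁ := by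
  have pm : Measurable fun p : E₁ × E₂ × E₃ => p.1 := measurable_fst
  have hT₁ : MeasurableSet {p : E₁ × E₂ × E₃ | p.1 = o₁} := pm (measurableSet_singleton o₁)
  ext A hA
  set T₁ := {p : E₁ × E₂ × E₃ | p.1 = o₁} with hT₁def
  set T₂ := {p : E₁ × E₂ × E₃ | p.2.1 = o₂} with hT₂def
  set N := {p : E₁ × E₂ × E₃ | p.1 ≠ o₁ ∧ p.2.1 ≠ o₂} with hNdef
  set X := (fun p : E₁ × E₂ × E₃ => p.1) ⁻¹' A with hXdef
  have hX : MeasurableSet X := pm hA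
  have hdiff : μ X = μ (X \ N) := (measure_diff_null h0).symm
  have hsplit : X \ N = (X ∩ (T₁ᶜ ∩ T₂)) ∪ (X ∩ T₁) := by
    ext p
    simp only [hNdef, hT₁def, hT₂def, Set.mem_diff, Set.mem_union, Set.mem_inter_iff,
      Set.mem_compl_iff, Set.mem_setOf_eq, not_and, not_not]
    tauto
  have hXsplit : μ X = μ (X ∩ (T₁ᶜ ∩ T₂)) + μ (X ∩ T₁) := by
    rw [hdiff, hsplit, measure_union ?_ (hX.inter hT₁)]
    exact Set.disjoint_left.2 fun p hp hp' => hp.2.1 hp'.2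
  have hend : μ (X ∩ T₁) = c₁ * Measure.dirac o₁ A := by
    rw [Measure.dirac_apply' _ hA]
    by_cases ho : o₁ ∈ A
    · have hXT : X ∩ T₁ = T₁ := Set.inter_eq_right.2 fun p hp => by
        simp only [hXdef, Set.mem_preimage]
        rw [show p.1 = o₁ from hp]
        exact ho
      rw [hXT, h1, Set.indicator_of_mem ho, Pi.one_apply, mul_one]
    · have hXT : X ∩ T₁ = ∅ := by
        ext p
        simp only [Set.mem_inter_iff, Set.mem_empty_iff_false, iff_false]
        rintro ⟨hp, hp'⟩
        exact ho (by rw [← show p.1 = o₁ from hp']; exact hp)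
      rw [hXT, Set.indicator_of_notMem ho, measure_empty, mul_zero]
  rw [Measure.map_apply pm hA, Measure.add_apply,
    Measure.map_apply pm hA, Measure.restrict_apply hX, Measure.smul_apply, smul_eq_mul]
  rw [hXsplit, hend]

end Proj

/-- On the punctured triple product space, if `Λ` has infinite total mass, assigns no mass
to `{y₁ ≠ o₁, y₂ ≠ o₂}`, has σ-finite punctured marginals, and satisfies the explosiveness
condition `Λ(yⱼ = oⱼ) ∈ {0, ∞}` for `j = 1, 2`, then the first two projections of a Poisson
point process with mean measure `Λ` are independent. -/
theorem projections_indep_of_disjoint_support {Ω E₁ E₂ E₃ : Type*} [MeasurableSpace Ω]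
    [MeasurableSpace E₁] [MeasurableSpace E₂] [MeasurableSpace E₃]
    [MeasurableSingletonClass E₁] [MeasurableSingletonClass E₂] [MeasurableSingletonClass E₃]
    (P : Measure Ω) [IsProbabilityMeasure P]
    (Λ : Measure (E₁ × E₂ × E₃)) (o₁ : E₁) (o₂ : E₂) (o₃ : E₃)
    (hpunct : Λ {(o₁, o₂, o₃)} = 0)
    (htotal : Λ Set.univ = ∞)
    (hjoint : Λ {p | p.1 ≠ o₁ ∧ p.2.1 ≠ o₂} = 0)
    (hσ₁ : SigmaFinite ((Λ.map fun p => p.1).restrict {o₁}ᶜ))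
    (hσ₂ : SigmaFinite ((Λ.map fun p => p.2.1).restrict {o₂}ᶜ))
    (hexpl₁ : Λ {p | p.1 = o₁} ∈ ({0, ∞} : Set ℝ≥0∞))
    (hexpl₂ : Λ {p | p.2.1 = o₂} ∈ ({0, ∞} : Set ℝ≥0∞))
    (ξ : Ω → Measure (E₁ × E₂ × E₃)) (hξ : IsPoissonPP P ξ Λ) :
    IndepFun (fun ω => (ξ ω).map fun p => p.1) (fun ω => (ξ ω).map fun p => p.2.1) P := by
  simp only [Set.mem_insert_iff, Set.mem_singleton_iff] at hexpl₁ hexpl₂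
  have pm1 : Measurable fun p : E₁ × E₂ × E₃ => p.1 := measurable_fst
  have pm2 : Measurable fun p : E₁ × E₂ × E₃ => p.2.1 := measurable_fst.comp measurable_snd
  have hT₁ : MeasurableSet {p : E₁ × E₂ × E₃ | p.1 = o₁} := pm1 (measurableSet_singleton o₁)
  have hT₂ : MeasurableSet {p : E₁ × E₂ × E₃ | p.2.1 = o₂} := pm2 (measurableSet_singleton o₂)
  have hNmeas : MeasurableSet {p : E₁ × E₂ × E₃ | p.1 ≠ o₁ ∧ p.2.1 ≠ o₂} :=
    hT₁.compl.inter hT₂.compl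
  set S₁ : Set (E₁ × E₂ × E₃) :=
    {p : E₁ × E₂ × E₃ | p.1 = o₁}ᶜ ∩ {p : E₁ × E₂ × E₃ | p.2.1 = o₂} with hS₁def
  set S₂ : Set (E₁ × E₂ × E₃) := {p : E₁ × E₂ × E₃ | p.2.1 = o₂}ᶜ with hS₂def
  have hS₁ : MeasurableSet S₁ := hT₁.compl.inter hT₂
  have hS₂ : MeasurableSet S₂ := hT₂.compl
  have hdisjS : Disjoint S₁ S₂ := Set.disjoint_left.2 fun p hp hp' => hp' hp.2
  set c₁ := Λ {p : E₁ × E₂ × E₃ | p.1 = o₁} with hc₁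
  set c₂ := Λ {p : E₁ × E₂ × E₃ | p.2.1 = o₂} with hc₂
  set η₁ : Ω → Measure E₁ := fun ω =>
    ((ξ ω).restrict S₁).map (fun p : E₁ × E₂ × E₃ => p.1) + c₁ • Measure.dirac o₁ with hη₁
  set η₂ : Ω → Measure E₂ := fun ω =>
    ((ξ ω).restrict S₂).map (fun p : E₁ × E₂ × E₃ => p.2.1) + c₂ • Measure.dirac o₂ with hη₂
  -- a.e. equalities
  have haeN : ∀ᵐ ω ∂P, ξ ω {p : E₁ × E₂ × E₃ | p.1 ≠ o₁ ∧ p.2.1 ≠ o₂} = 0 := by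
    have := ae_count_eq hξ hNmeas (Or.inl hjoint)
    filter_upwards [this] with ω hω
    rw [hω, hjoint]
  have hae1 : ∀ᵐ ω ∂P, ξ ω {p : E₁ × E₂ × E₃ | p.1 = o₁} = c₁ :=
    ae_count_eq hξ hT₁ hexpl₁
  have hae2 : ∀ᵐ ω ∂P, ξ ω {p : E₁ × E₂ × E₃ | p.2.1 = o₂} = c₂ :=
    ae_count_eq hξ hT₂ hexpl₂
  have haeη₁ : η₁ =ᵐ[P] fun ω => (ξ ω).map fun p => p.1 := by
    filter_upwards [haeN, hae1] with ω hω0 hω1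
    exact (proj1_formula (ξ ω) o₁ o₂ c₁ hω0 hω1).symm
  have haeη₂ : η₂ =ᵐ[P] fun ω => (ξ ω).map fun p => p.2.1 := by
    filter_upwards [hae2] with ω hω2
    exact (proj2_formula (ξ ω) o₂ c₂ hω2).symm
  -- independence of η's
  have hcore := indep_countSigma P Λ ξ hξ hS₁ hS₂ hdisjS
  have hmble₁ : Measurable[countSigma ξ S₁] η₁ := by
    refine @Measure.measurable_of_measurable_coe E₁ Ω _ (countSigma ξ S₁) η₁ ?_
    intro A hA
    have hfun : (fun ω => η₁ ω A) =
        fun ω => ξ ω ((fun p : E₁ × E₂ × E₃ => p.1) ⁻¹' A ∩ S₁)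
          + c₁ * Measure.dirac o₁ A := by
      funext ω
      rw [hη₁]
      rw [Measure.add_apply, Measure.map_apply pm1 hA, Measure.restrict_apply (pm1 hA),
        Measure.smul_apply, smul_eq_mul]
    rw [hfun]
    refine Measurable.add ?_ measurable_const
    exact Measurable.of_comap_le
      (le_countSigma ξ ((pm1 hA).inter hS₁) Set.inter_subset_right)
  have hmble₂ : Measurable[countSigma ξ S₂] η₂ := by
    refine @Measure.measurable_of_measurable_coe E₂ Ω _ (countSigma ξ S₂) η₂ ?_
    intro A hA
    have hfun : (fun ω => η₂ ω A) =
        fun ω => ξ ω ((fun p : E₁ × E₂ × E₃ => p.2.1) ⁻¹' A ∩ S₂)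
          + c₂ * Measure.dirac o₂ A := by
      funext ω
      rw [hη₂]
      rw [Measure.add_apply, Measure.map_apply pm2 hA, Measure.restrict_apply (pm2 hA),
        Measure.smul_apply, smul_eq_mul]
    rw [hfun]
    refine Measurable.add ?_ measurable_const
    exact Measurable.of_comap_le
      (le_countSigma ξ ((pm2 hA).inter hS₂) Set.inter_subset_right)
  have hIη : IndepFun η₁ η₂ P := by
    have h := indep_of_indep_of_le_left
      (indep_of_indep_of_le_right hcore hmble₂.comap_le) hmble₁.comap_le
    exact h
  exact IndepFun.congr hIη haeη₁ haeη₂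
end
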